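/- If f : X → X is a homeomorphism of a compact metric space satisfying the L-shadowing property, then f satisfies the limit shadowing property. -/
import Mathlib


open Metric Filter

/-- The `n`-th iterate (for `n : ℤ`) of a homeomorphism `f`. -/
def zIter {X : Type*} [TopologicalSpace X] (f : X ≃ₜ X) (n : ℤ) : X → X :=
  fun y => (f.toEquiv ^ n) y

/-- The L-shadowing property for a homeomorphism `f`. Convergence as `|k| → ∞` is expressed
using the cofinite filter on `ℤ`. -/
def LShadowing {X : Type*} [MetricSpace X] (f : X ≃ₜ X) : Prop :=
  ∀ ε > (0 : ℝ), ∃ δ > (0 : ℝ), ∀ x : ℤ → X,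
    (∀ k : ℤ, dist (f (x k)) (x (k + 1)) ≤ δ) →
    Tendsto (fun k : ℤ => dist (f (x k)) (x (k + 1))) cofinite (nhds 0) →
    ∃ z : X, (∀ k : ℤ, dist (zIter f k z) (x k) ≤ ε) ∧
      Tendsto (fun k : ℤ => dist (zIter f k z) (x k)) cofinite (nhds 0)

/-- The limit shadowing property: every limit pseudo-orbit `(x_k)_{k ∈ ℕ}`
(i.e. `d(f(x_k), x_{k+1}) → 0`) is limit-shadowed by some `y`
(i.e. `d(f^k(y), x_k) → 0`). -/
def LimitShadowing {X : Type*} [MetricSpace X] (f : X → X) : Prop :=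
  ∀ x : ℕ → X, Tendsto (fun k : ℕ => dist (f (x k)) (x (k + 1))) atTop (nhds 0) →
    ∃ y : X, Tendsto (fun k : ℕ => dist (f^[k] y) (x k)) atTop (nhds 0)

lemma zIter_add {X : Type*} [TopologicalSpace X] (f : X ≃ₜ X) (a b : ℤ) (z : X) :
    zIter f a (zIter f b z) = zIter f (a + b) z := by
  simp [zIter, zpow_add, Equiv.Perm.mul_apply]

lemma zIter_one_apply {X : Type*} [TopologicalSpace X] (f : X ≃ₜ X) (z : X) :
    zIter f 1 z = f z := by
  simp [zIter]

lemma f_zIter {X : Type*} [TopologicalSpace X] (f : X ≃ₜ X) (k : ℤ) (z : X) :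
    f (zIter f k z) = zIter f (k + 1) z := by
  rw [← zIter_one_apply f (zIter f k z), zIter_add, add_comm]

lemma zIter_natCast {X : Type*} [TopologicalSpace X] (f : X ≃ₜ X) (n : ℕ) (z : X) :
    zIter f (n : ℤ) z = f^[n] z := by
  induction n with
  | zero => simp [zIter]
  | succ n ih =>
    rw [Function.iterate_succ_apply', ← ih, f_zIter]
    norm_num

/-- A homeomorphism of a compact metric space satisfying the L-shadowing property satisfies
the limit shadowing property. -/
theorem lShadowing_implies_limitShadowing {X : Type*} [MetricSpace X] [CompactSpace X]
    (f : X ≃ₜ X) (hL : LShadowing f) : LimitShadowing (⇑f) := by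
  intro x hx
  obtain ⟨δ, hδ, hδs⟩ := hL 1 one_pos
  obtain ⟨N, hN⟩ := Filter.eventually_atTop.mp (hx.eventually (gt_mem_nhds hδ))
  set y : ℤ → X := fun k => if 0 ≤ k then x (N + k.toNat) else zIter f k (x N) with hy
  have hy_nonneg : ∀ k : ℤ, 0 ≤ k → y k = x (N + k.toNat) := by
    intro k hk; simp [hy, hk]
  have hy_neg : ∀ k : ℤ, k < 0 → y k = zIter f k (x N) := by
    intro k hk; simp [hy, not_le.mpr hk]
  have hstep_neg : ∀ k : ℤ, k < 0 → f (y k) = y (k + 1) := by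
    intro k hk
    rw [hy_neg k hk, f_zIter]
    rcases lt_or_ge (k + 1) 0 with h | h
    · rw [hy_neg _ h]
    · have hk1 : k + 1 = 0 := le_antisymm (by omega) h
      rw [hk1, hy_nonneg 0 le_rfl]
      simp [zIter]
  have hstep_nonneg : ∀ k : ℤ, 0 ≤ k →
      dist (f (y k)) (y (k + 1)) = dist (f (x (N + k.toNat))) (x (N + k.toNat + 1)) := by
    intro k hk
    rw [hy_nonneg k hk, hy_nonneg (k + 1) (by omega)]
    have : (k + 1).toNat = k.toNat + 1 := by omega
    rw [this, ← add_assoc]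
  have hbound : ∀ k : ℤ, dist (f (y k)) (y (k + 1)) ≤ δ := by
    intro k
    rcases lt_or_ge k 0 with h | h
    · rw [hstep_neg k h]; simp [le_of_lt hδ]
    · rw [hstep_nonneg k h]
      exact le_of_lt (hN _ (Nat.le_add_right _ _))
  have hcof : Tendsto (fun k : ℤ => dist (f (y k)) (y (k + 1))) cofinite (nhds 0) := by
    rw [Int.cofinite_eq, tendsto_sup]
    constructor
    · apply Tendsto.congr' _ tendsto_const_nhds
      filter_upwards [Filter.eventually_le_atBot (-1 : ℤ)] with k hk
      rw [hstep_neg k (by omega), dist_self]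
    · have hcomp : Tendsto (fun k : ℤ => N + k.toNat) atTop atTop := by
        apply Filter.tendsto_atTop_atTop.mpr
        intro b
        exact ⟨(b : ℤ), fun a ha => by omega⟩
      apply Tendsto.congr' _ (hx.comp hcomp)
      filter_upwards [Filter.eventually_ge_atTop (0 : ℤ)] with k hk
      exact (hstep_nonneg k hk).symm
  obtain ⟨z, _, hz2⟩ := hδs y hbound hcof
  refine ⟨zIter f (-(N : ℤ)) z, ?_⟩
  have hz2' : Tendsto (fun k : ℤ => dist (zIter f k z) (y k)) atTop (nhds 0) :=
    hz2.mono_left (by rw [Int.cofinite_eq]; exact le_sup_right)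
  have hcomp2 : Tendsto (fun k : ℕ => (k : ℤ) - N) atTop atTop := by
    apply Filter.tendsto_atTop_add_const_right atTop (-(N : ℤ))
    exact tendsto_natCast_atTop_atTop
  apply Tendsto.congr' _ (hz2'.comp hcomp2)
  filter_upwards [Filter.eventually_ge_atTop N] with k hk
  have h1 : f^[k] (zIter f (-(N : ℤ)) z) = zIter f ((k : ℤ) - N) z := by
    rw [← zIter_natCast, zIter_add]
    ring_nf
  have h2 : y ((k : ℤ) - N) = x k := by
    rw [hy_nonneg _ (by omega)]
    congr 1
    omega
  simp only [Function.comp_apply, h1, h2]
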